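/- arXiv:1301.5585 — 2 statements merged into one kernel-verified Lean document; each statement's English description precedes it below -/
import Mathlib

section
/- The reversal A^R of the átomaton A of a non-empty regular language L is a deterministic finite automaton, and A^R is a minimal DFA accepting the reversal language L^R. -/
/-! Basic definitions: left quotients, atoms, and operations on finite automata. -/

/-- The left quotient of a language `L` by a word `w`: `w⁻¹L = {x | w ++ x ∈ L}`. -/
def leftQuot {α : Type} (L : Language α) (w : List α) : Language α := {x | w ++ x ∈ L}

/-- The set of all left quotients of `L`. -/
def quots {α : Type} (L : Language α) : Set (Language α) := {K | ∃ w : List α, K = leftQuot L w}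

/-- `A` is an atom of `L`: a non-empty intersection `K̃_0 ∩ ⋯ ∩ K̃_{n−1}` where each `K̃_i` is a
quotient `K_i` of `L` or its complement (`S` is the set of uncomplemented quotients, so a word is
in the intersection iff it belongs exactly to the quotients in `S`). -/
def IsAtomOf {α : Type} (L A : Language α) : Prop :=
  (∃ x, x ∈ A) ∧ ∃ S : Set (Language α), S ⊆ quots L ∧
    A = {x | ∀ K ∈ quots L, (x ∈ K ↔ K ∈ S)}

/-- A positive atom: at least one term of its defining intersection is uncomplemented,
equivalently the atom is contained in some quotient of `L`. -/
def IsPositiveAtomOf {α : Type} (L A : Language α) : Prop :=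
  IsAtomOf L A ∧ ∃ K ∈ quots L, ∀ x ∈ A, x ∈ K

namespace NFA

/-- The right language of a state `q`: words accepted starting from `q`. -/
def rightLang {α σ : Type} (M : NFA α σ) (q : σ) : Language α :=
  {w | ∃ p ∈ M.accept, p ∈ M.evalFrom {q} w}

/-- The left language of a state `q`: words leading from the initial states to `q`. -/
def leftLang {α σ : Type} (M : NFA α σ) (q : σ) : Language α :=
  {w | q ∈ M.eval w}

/-- An NFA is trim if every state has a non-empty left language and right language. -/
def IsTrim {α σ : Type} (M : NFA α σ) : Prop :=
  ∀ q, (∃ w, w ∈ M.leftLang q) ∧ (∃ w, w ∈ M.rightLang q)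

/-- An NFA is reduced if distinct states have distinct right languages. -/
def IsReduced {α σ : Type} (M : NFA α σ) : Prop :=
  ∀ q p, M.rightLang q = M.rightLang p → q = p

/-- An NFA is atomic if the right language of every state is a union of positive atoms of the
accepted language. -/
def IsAtomic {α σ : Type} (M : NFA α σ) : Prop :=
  ∀ q, ∃ 𝒜 : Set (Language α), (∀ A ∈ 𝒜, IsPositiveAtomOf M.accepts A) ∧
    M.rightLang q = {w | ∃ A ∈ 𝒜, w ∈ A}

/-- Reversal of an NFA: interchange initial and final states and reverse all transitions. -/
def rev {α σ : Type} (M : NFA α σ) : NFA α σ :=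
  ⟨fun q a => {p | q ∈ M.step p a}, M.accept, M.start⟩

/-- States of the determinization of an NFA: the subsets of states reachable from the initial
subset. -/
def detStates {α σ : Type} (M : NFA α σ) : Type := {S : Set σ // ∃ w, M.eval w = S}

instance {α σ : Type} [Finite σ] (M : NFA α σ) : Finite M.detStates :=
  Subtype.finite

/-- Determinization of an NFA by the subset construction, keeping only the subsets reachable
from the initial subset. -/
def det {α σ : Type} (M : NFA α σ) : DFA α M.detStates where
  step S a := ⟨M.stepSet S.1 a, by
    obtain ⟨w, hw⟩ := S.2
    exact ⟨w ++ [a], by rw [NFA.eval_append_singleton, hw]⟩⟩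
  start := ⟨M.start, [], rfl⟩
  accept := {S | ∃ p ∈ M.accept, p ∈ S.1}

end NFA

/-- Reversal of a DFA, yielding an NFA. -/
def DFA.rev {α σ : Type} (M : DFA α σ) : NFA α σ :=
  ⟨fun q a => {p | M.step p a = q}, M.accept, {M.start}⟩

/-- A DFA is minimal if no DFA accepting the same language has fewer states. -/
def DFA.IsMinimal {α σ : Type} (M : DFA α σ) : Prop :=
  ∀ (σ' : Type) (_ : Finite σ') (M' : DFA α σ'), M'.accepts = M.accepts →
    Nat.card σ ≤ Nat.card σ'

/-- The átomaton of `L`: states are the atoms of `L`, the initial states are the initial atoms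
(those contained in `L`, i.e., with `L` occurring uncomplemented among their terms), the final
states are the atoms containing `ε` (there is exactly one such atom when `L ≠ ∅`), and the atom
`B` is an `a`-successor of the atom `A` iff `a·B ⊆ A`. -/
def atomaton {α : Type} (L : Language α) : NFA α {A : Language α // IsAtomOf L A} where
  step A a := {B | ∀ w ∈ B.1, a :: w ∈ A.1}
  start := {A | ∀ x ∈ A.1, x ∈ L}
  accept := {A | [] ∈ A.1}

/-! The atom of `L` containing `x` consists of the words `y` lying in exactly the same quotients
`w⁻¹L` as `x`, i.e. with `wy ∈ L ↔ wx ∈ L` for all `w`: read backwards, the atoms are the classes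
of the Nerode congruence of `Lᴿ`. In the reversed átomaton, reading `w` from the unique initial
state (the atom of `ε`) leads exactly to the atom of `wᴿ`, so the reversal is deterministic and
accepts `Lᴿ`. Any DFA for `Lᴿ` reaches different states on `xᴿ` and `yᴿ` when `x` and `y` lie in
different atoms, so it has at least as many states as there are atoms. -/

section Atoms

variable {α : Type}

abbrev Atom (L : Language α) : Type := {A : Language α // IsAtomOf L A}

lemma forall_mem_quots_iff {L : Language α} {P : Language α → Prop} :
    (∀ K ∈ quots L, P K) ↔ ∀ w, P (leftQuot L w) := by
  simp [quots]

lemma IsAtomOf.eq_setOf_forall_append_mem_iff {L A : Language α} (hA : IsAtomOf L A)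
    {x : List α} (hx : x ∈ A) : A = {y | ∀ w, w ++ y ∈ L ↔ w ++ x ∈ L} := by
  obtain ⟨-, S, -, rfl⟩ := hA
  have hxS : ∀ w, x ∈ leftQuot L w ↔ leftQuot L w ∈ S := forall_mem_quots_iff.1 hx
  ext y
  change (∀ K ∈ quots L, _) ↔ _
  rw [forall_mem_quots_iff]
  exact forall_congr' fun w => by rw [← hxS]; rfl

lemma isAtomOf_setOf_forall_append_mem_iff (L : Language α) (x : List α) :
    IsAtomOf L {y | ∀ w, w ++ y ∈ L ↔ w ++ x ∈ L} := by
  refine ⟨⟨x, fun _ => Iff.rfl⟩, {K | K ∈ quots L ∧ x ∈ K}, fun K hK => hK.1, ?_⟩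
  ext y
  change _ ↔ ∀ K ∈ quots L, _
  rw [forall_mem_quots_iff]
  exact forall_congr' fun w => iff_congr Iff.rfl ⟨fun h => ⟨⟨w, rfl⟩, h⟩, And.right⟩

def atomOf (L : Language α) (x : List α) : Atom L :=
  ⟨{y | ∀ w, w ++ y ∈ L ↔ w ++ x ∈ L}, isAtomOf_setOf_forall_append_mem_iff L x⟩

variable {L : Language α}

lemma mem_atomOf_self (x : List α) : x ∈ (atomOf L x).1 := fun _ => Iff.rfl

lemma Atom.eq_atomOf (A : Atom L) {x : List α} (hx : x ∈ A.1) : A = atomOf L x :=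
  Subtype.ext (A.2.eq_setOf_forall_append_mem_iff hx)

lemma cons_mem_atomOf {x y : List α} (h : y ∈ (atomOf L x).1) (a : α) :
    a :: y ∈ (atomOf L (a :: x)).1 := fun w => by
  simpa using h (w ++ [a])

lemma atomOf_subset_iff_mem {x : List α} : (∀ y ∈ (atomOf L x).1, y ∈ L) ↔ x ∈ L :=
  ⟨fun h => h x (mem_atomOf_self x), fun hx _ hy => (hy []).2 hx⟩

lemma mem_rev_start_atomaton_iff {A : Atom L} : A ∈ (atomaton L).rev.start ↔ A = atomOf L [] :=
  ⟨A.eq_atomOf, fun h => h ▸ mem_atomOf_self []⟩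

lemma mem_rev_step_atomaton_iff {A B : Atom L} {x : List α} (hx : x ∈ A.1) (a : α) :
    B ∈ (atomaton L).rev.step A a ↔ B = atomOf L (a :: x) := by
  refine ⟨fun hB => B.eq_atomOf (hB x hx), ?_⟩
  rintro rfl y hy
  exact cons_mem_atomOf (A.eq_atomOf hx ▸ hy) a

lemma mem_rev_eval_atomaton_iff {A : Atom L} (w : List α) :
    A ∈ (atomaton L).rev.eval w ↔ A = atomOf L w.reverse := by
  induction w using List.reverseRecOn generalizing A with
  | nil => exact mem_rev_start_atomaton_iff
  | append_singleton v a ih =>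
    simp only [NFA.eval_append_singleton, NFA.mem_stepSet, ih, exists_eq_left,
      List.reverse_append, List.reverse_singleton, List.singleton_append]
    exact mem_rev_step_atomaton_iff (mem_atomOf_self _) a

lemma rev_atomaton_accepts : (atomaton L).rev.accepts = L.reverse := by
  ext w
  rw [NFA.mem_accepts, Language.mem_reverse, ← atomOf_subset_iff_mem]
  exact ⟨fun ⟨A, hA, hw⟩ => (mem_rev_eval_atomaton_iff w).1 hw ▸ hA,
    fun h => ⟨_, h, (mem_rev_eval_atomaton_iff w).2 rfl⟩⟩

lemma atomOf_eq_of_eval_reverse_eq {σ : Type} {M : DFA α σ} (hM : M.accepts = L.reverse)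
    {x y : List α} (h : M.eval x.reverse = M.eval y.reverse) : atomOf L x = atomOf L y := by
  have hquot : M.accepts.leftQuotient x.reverse = M.accepts.leftQuotient y.reverse := by
    rw [Language.leftQuotient_accepts_apply, Language.leftQuotient_accepts_apply, h]
  refine (atomOf L x).eq_atomOf fun w => ?_
  have hw : x.reverse ++ w.reverse ∈ M.accepts ↔ y.reverse ++ w.reverse ∈ M.accepts := by
    rw [← Language.mem_leftQuotient, hquot, Language.mem_leftQuotient]
  simpa [hM] using hw.symm

lemma card_atom_le_of_accepts_reverse {σ : Type} [Finite σ] {M : DFA α σ}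
    (hM : M.accepts = L.reverse) : Nat.card (Atom L) ≤ Nat.card σ := by
  choose x hx using fun A : Atom L => A.2.1
  refine Nat.card_le_card_of_injective (fun A => M.eval (x A).reverse) fun A B h => ?_
  rw [A.eq_atomOf (hx A), B.eq_atomOf (hx B)]
  exact atomOf_eq_of_eval_reverse_eq hM h

end Atoms

theorem atomaton_rev_minimal_dfa_general {α : Type} {L : Language α} :
    (∃! A : {A : Language α // IsAtomOf L A}, A ∈ (atomaton L).rev.start) ∧
    (∀ (A : {A : Language α // IsAtomOf L A}) (a : α),
      ∃! B : {A : Language α // IsAtomOf L A}, B ∈ (atomaton L).rev.step A a) ∧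
    (atomaton L).rev.accepts = L.reverse ∧
    (∀ (σ' : Type) (_ : Finite σ') (D' : DFA α σ'), D'.accepts = L.reverse →
      Nat.card {A : Language α // IsAtomOf L A} ≤ Nat.card σ') := by
  refine ⟨(existsUnique_congr fun _ => mem_rev_start_atomaton_iff).2 existsUnique_eq,
    fun A a => ?_, rev_atomaton_accepts, fun _ _ _ hD => card_atom_le_of_accepts_reverse hD⟩
  obtain ⟨x, hx⟩ := A.2.1
  exact (existsUnique_congr fun _ => mem_rev_step_atomaton_iff hx a).2 existsUnique_eq

/-- The reversal of the átomaton of a non-empty regular language `L` is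
deterministic (it has exactly one initial state and exactly one successor per state and letter),
it accepts the reversal language `L^R`, and it is a minimal DFA for `L^R`: no DFA accepting
`L^R` has fewer states than the number of atoms of `L`. -/
theorem atomaton_rev_minimal_dfa {α : Type} [Finite α] {L : Language α} (hL : L.IsRegular)
    (hne : ∃ w, w ∈ L) :
    (∃! A : {A : Language α // IsAtomOf L A}, A ∈ (atomaton L).rev.start) ∧
    (∀ (A : {A : Language α // IsAtomOf L A}) (a : α),
      ∃! B : {A : Language α // IsAtomOf L A}, B ∈ (atomaton L).rev.step A a) ∧
    (atomaton L).rev.accepts = L.reverse ∧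
    (∀ (σ' : Type) (_ : Finite σ') (D' : DFA α σ'), D'.accepts = L.reverse →
      Nat.card {A : Language α // IsAtomOf L A} ≤ Nat.card σ') :=
  atomaton_rev_minimal_dfa_general
end

section
/- Let L be a non-empty regular language with quotient DFA D and átomaton A. The map φ that assigns to each atom A_j = K_{i_0} ∩ ⋯ ∩ K_{i_{n−r−1}} ∩ K̄_{i_{n−r}} ∩ ⋯ ∩ K̄_{i_{n−1}} the set {K_{i_0},…,K_{i_{n−r−1}}} of its uncomplemented quotients is a DFA isomorphism between A^R (the reversal of the átomaton) and D^{R D} (the determinized reversal of the quotient DFA): φ is a bijection from the states of A^R onto the states of D^{R D} that maps the initial state to the initial state, final states onto final states, and commutes with the transition functions. -/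
theorem leftQuot_leftQuot {α : Type} (L : Language α) (w v : List α) :
    leftQuot (leftQuot L w) v = leftQuot L (w ++ v) :=
  Set.ext fun x => by
    show w ++ (v ++ x) ∈ L ↔ (w ++ v) ++ x ∈ L
    rw [List.append_assoc]

theorem leftQuot_nil {α : Type} (L : Language α) : leftQuot L [] = L :=
  Set.ext fun _ => Iff.rfl

/-- The quotient DFA of `L`: states are the left quotients of `L`, the initial state is `L`
itself, the final states are the quotients containing `ε`, and `δ(K, a) = a⁻¹K`. -/
def quotDFA {α : Type} (L : Language α) : DFA α {K : Language α // K ∈ quots L} where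
  step K a := ⟨leftQuot K.1 [a], by
    obtain ⟨w, hw⟩ := K.2
    exact ⟨w ++ [a], by rw [hw, leftQuot_leftQuot]⟩⟩
  start := ⟨L, [], (leftQuot_nil L).symm⟩
  accept := {K | [] ∈ K.1}

/-! Every word `x` determines the set `memQuots L x` of quotients of `L` containing it, and the
atoms of `L` are exactly the fibres of `x ↦ memQuots L x`. Reading `w` in the reversed quotient
DFA leads from its initial subset, the quotients containing `ε`, to `memQuots L wᴿ`, because
`K` is an `a`-predecessor of `K'` iff `a⁻¹K = K'`. Since `a⁻¹` maps quotients to quotients,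
`memQuots L (a x)` depends only on `memQuots L x`; hence `a·A ⊆ B` holds iff `a x ∈ B` for a
single `x ∈ A`, i.e. iff the subset step sends the image of `A` to the image of `B`. -/

theorem NFA.detStates_ext_iff {α σ : Type} {M : NFA α σ} {S T : M.detStates} :
    S = T ↔ S.1 = T.1 :=
  Subtype.ext_iff

section Atoms

variable {α : Type} {L : Language α} {A B : Language α} {x y : List α}

theorem leftQuot_mem_quots {K : Language α} (hK : K ∈ quots L) (v : List α) :
    leftQuot K v ∈ quots L := by
  obtain ⟨w, rfl⟩ := hK
  exact ⟨w ++ v, leftQuot_leftQuot L w v⟩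

def memQuots (L : Language α) (x : List α) : Set {K : Language α // K ∈ quots L} :=
  {K | x ∈ K.1}

theorem memQuots_eq_memQuots_iff :
    memQuots L y = memQuots L x ↔ ∀ K ∈ quots L, (y ∈ K ↔ x ∈ K) := by
  simp only [memQuots, Set.ext_iff, Set.mem_ofPred_eq, Subtype.forall]

theorem memQuots_cons_congr (h : memQuots L y = memQuots L x) (a : α) :
    memQuots L (a :: y) = memQuots L (a :: x) := by
  rw [memQuots_eq_memQuots_iff] at h ⊢
  exact fun K hK => h (leftQuot K [a]) (leftQuot_mem_quots hK [a])

theorem IsAtomOf.mem_iff (hA : IsAtomOf L A) (hx : x ∈ A) :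
    y ∈ A ↔ memQuots L y = memQuots L x := by
  obtain ⟨-, S, -, rfl⟩ := hA
  rw [memQuots_eq_memQuots_iff]
  exact ⟨fun hy K hK => (hy K hK).trans (hx K hK).symm,
    fun hy K hK => (hy K hK).trans (hx K hK)⟩

theorem IsAtomOf.eq_of_mem (hA : IsAtomOf L A) (hB : IsAtomOf L B) (hxA : x ∈ A)
    (hxB : x ∈ B) : A = B :=
  Set.ext fun _ => (hA.mem_iff hxA).trans (hB.mem_iff hxB).symm

theorem isAtomOf_memQuots_fiber (L : Language α) (x : List α) :
    IsAtomOf L {y | memQuots L y = memQuots L x} := by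
  refine ⟨⟨x, rfl⟩, {K | K ∈ quots L ∧ x ∈ K}, fun _ hK => hK.1, Set.ext fun y => ?_⟩
  simp only [Set.mem_ofPred_eq, memQuots_eq_memQuots_iff]
  exact forall₂_congr fun K hK => by simp [hK]

theorem IsAtomOf.setOf_subset_eq_memQuots (hA : IsAtomOf L A) (hx : x ∈ A) :
    {K : {K : Language α // K ∈ quots L} | ∀ y ∈ A, y ∈ K.1} = memQuots L x := by
  refine Set.ext fun K => ⟨fun h => h x hx, fun hK y hy => ?_⟩
  rw [hA.mem_iff hx] at hy
  rwa [← Set.ext_iff.mp hy K] at hK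

end Atoms

section RevQuotDFA

variable {α : Type} {L : Language α}

theorem quotDFA_rev_stepSet_memQuots (x : List α) (a : α) :
    (quotDFA L).rev.stepSet (memQuots L x) a = memQuots L (a :: x) := by
  ext K
  simp only [NFA.stepSet, DFA.rev, Set.mem_iUnion, Set.mem_ofPred_eq, memQuots, exists_prop]
  exact ⟨by rintro ⟨_, hx, rfl⟩; exact hx, fun h => ⟨(quotDFA L).step K a, h, rfl⟩⟩

theorem quotDFA_rev_eval (w : List α) : (quotDFA L).rev.eval w = memQuots L w.reverse := by
  induction w using List.reverseRecOn with
  | nil => rfl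
  | append_singleton w a ih =>
    rw [NFA.eval_append_singleton, ih, quotDFA_rev_stepSet_memQuots]
    simp

end RevQuotDFA

section Iso

variable {α : Type} {L : Language α}

def atomToRevDetState (L : Language α) (A : {A : Language α // IsAtomOf L A}) :
    (quotDFA L).rev.detStates :=
  ⟨{K | ∀ x ∈ A.1, x ∈ K.1}, by
    obtain ⟨x, hx⟩ := A.2.1
    exact ⟨x.reverse, by rw [quotDFA_rev_eval, List.reverse_reverse,
      A.2.setOf_subset_eq_memQuots hx]⟩⟩

theorem atomToRevDetState_val_eq_memQuots_iff (A : {A : Language α // IsAtomOf L A})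
    (y : List α) : (atomToRevDetState L A).1 = memQuots L y ↔ y ∈ A.1 := by
  obtain ⟨x, hx⟩ := A.2.1
  change {K | ∀ x ∈ A.1, x ∈ K.1} = memQuots L y ↔ _
  rw [A.2.setOf_subset_eq_memQuots hx, A.2.mem_iff hx, eq_comm]

theorem atomToRevDetState_bijective : Function.Bijective (atomToRevDetState L) := by
  refine ⟨fun A B hAB => ?_, ?_⟩
  · obtain ⟨y, hy⟩ := B.2.1
    have hyA : y ∈ A.1 := by
      rw [← atomToRevDetState_val_eq_memQuots_iff, hAB,
        atomToRevDetState_val_eq_memQuots_iff]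
      exact hy
    exact Subtype.ext (A.2.eq_of_mem B.2 hyA hy)
  · rintro ⟨S, w, rfl⟩
    refine ⟨⟨_, isAtomOf_memQuots_fiber L w.reverse⟩, NFA.detStates_ext_iff.mpr ?_⟩
    exact ((atomToRevDetState_val_eq_memQuots_iff _ _).mpr rfl).trans (quotDFA_rev_eval w).symm

theorem atomToRevDetState_eq_start_iff (A : {A : Language α // IsAtomOf L A}) :
    atomToRevDetState L A = (quotDFA L).rev.det.start ↔ [] ∈ A.1 :=
  NFA.detStates_ext_iff.trans (atomToRevDetState_val_eq_memQuots_iff A [])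

theorem atomToRevDetState_mem_accept_iff (A : {A : Language α // IsAtomOf L A}) :
    atomToRevDetState L A ∈ (quotDFA L).rev.det.accept ↔ ∀ x ∈ A.1, x ∈ L :=
  ⟨by rintro ⟨_, rfl, h⟩; exact h, fun h => ⟨_, rfl, h⟩⟩

theorem rev_det_step_atomToRevDetState_eq_iff (A B : {A : Language α // IsAtomOf L A}) (a : α) :
    (quotDFA L).rev.det.step (atomToRevDetState L A) a = atomToRevDetState L B ↔
      ∀ w ∈ A.1, a :: w ∈ B.1 := by
  obtain ⟨x, hx⟩ := A.2.1
  have hA := (atomToRevDetState_val_eq_memQuots_iff A x).mpr hx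
  rw [NFA.detStates_ext_iff, eq_comm]
  change _ = (quotDFA L).rev.stepSet (atomToRevDetState L A).1 a ↔ _
  rw [hA, quotDFA_rev_stepSet_memQuots, atomToRevDetState_val_eq_memQuots_iff]
  refine ⟨fun hax w hw => ?_, fun h => h x hx⟩
  rw [B.2.mem_iff hax]
  exact memQuots_cons_congr ((A.2.mem_iff hx).mp hw) a

end Iso

theorem atomaton_rev_iso_det_general {α : Type} {L : Language α} :
    ∃ e : {A : Language α // IsAtomOf L A} ≃ (quotDFA L).rev.detStates,
      (∀ A, (e A).1 = {K : {K : Language α // K ∈ quots L} | ∀ x ∈ A.1, x ∈ K.1}) ∧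
      (∀ A, A ∈ (atomaton L).rev.start ↔ e A = (quotDFA L).rev.det.start) ∧
      (∀ A, A ∈ (atomaton L).rev.accept ↔ e A ∈ (quotDFA L).rev.det.accept) ∧
      (∀ A B a, B ∈ (atomaton L).rev.step A a ↔ (quotDFA L).rev.det.step (e A) a = e B) :=
  ⟨Equiv.ofBijective _ atomToRevDetState_bijective, fun _ => rfl,
    fun A => (atomToRevDetState_eq_start_iff A).symm,
    fun A => (atomToRevDetState_mem_accept_iff A).symm,
    fun A B a => (rev_det_step_atomToRevDetState_eq_iff A B a).symm⟩

/-- The map `φ` assigning to each atom the set of quotients occurring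
uncomplemented in it (equivalently, the quotients containing it) is a DFA isomorphism between
`A^R` (the reversal of the átomaton) and `D^{R D}` (the determinized reversal of the quotient
DFA): a bijection of the state sets mapping the initial state to the initial state, final
states onto final states, and commuting with the transition functions. -/
theorem atomaton_rev_iso_det {α : Type} [Finite α] {L : Language α} (hL : L.IsRegular)
    (hne : ∃ w, w ∈ L) :
    ∃ e : {A : Language α // IsAtomOf L A} ≃ (quotDFA L).rev.detStates,
      (∀ A, (e A).1 = {K : {K : Language α // K ∈ quots L} | ∀ x ∈ A.1, x ∈ K.1}) ∧
      (∀ A, A ∈ (atomaton L).rev.start ↔ e A = (quotDFA L).rev.det.start) ∧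
      (∀ A, A ∈ (atomaton L).rev.accept ↔ e A ∈ (quotDFA L).rev.det.accept) ∧
      (∀ A B a, B ∈ (atomaton L).rev.step A a ↔ (quotDFA L).rev.det.step (e A) a = e B) :=
  atomaton_rev_iso_det_general
end
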